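/- Let C : D(C) ⊆ H → Y be closed and densely defined, S ⊆ H a closed subspace with embedding ι_S, and suppose the restriction C ι_S : D(C) ∩ S ⊆ S → Y is densely defined in S. Then the operator [[0, -C ι_S],[closure(ι_S* C*), 0]] on Y ⊕ S is skew-selfadjoint, i.e. (C ι_S)* = closure(ι_S* C*). -/

import Mathlib

open RealInnerProductSpace

namespace AdjRestr

variable {E F : Type*}
  [NormedAddCommGroup E] [InnerProductSpace ℝ E] [CompleteSpace E]
  [NormedAddCommGroup F] [InnerProductSpace ℝ F] [CompleteSpace F]

theorem graph_mem_iff (f : E →ₗ.[ℝ] F) (x : E) (y : F) :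
    (x, y) ∈ f.graph ↔ ∃ hx : x ∈ f.domain, f ⟨x, hx⟩ = y := by
  rw [LinearPMap.mem_graph_iff]
  constructor
  · rintro ⟨⟨x', hx'⟩, h1, h2⟩
    simp only at h1
    subst h1
    exact ⟨hx', h2⟩
  · rintro ⟨hx, h⟩
    exact ⟨⟨x, hx⟩, rfl, h⟩

theorem mem_adjoint_graph_iff (A : E →ₗ.[ℝ] F) (hA : Dense (A.domain : Set E))
    (y : F) (z : E) :
    (y, z) ∈ A.adjoint.graph ↔ ∀ x : A.domain, ⟪z, (x : E)⟫ = ⟪y, A x⟫ := by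
  rw [graph_mem_iff]
  constructor
  · rintro ⟨hy, h⟩ x
    rw [← h]
    exact LinearPMap.adjoint_isFormalAdjoint hA ⟨y, hy⟩ x
  · intro h
    have hy : y ∈ A.adjoint.domain :=
      LinearPMap.mem_adjoint_domain_of_exists _ ⟨z, h⟩
    exact ⟨hy, LinearPMap.adjoint_apply_eq hA ⟨y, hy⟩ h⟩

/-- The "rotation" map `(u, v) ↦ (v, -u)` from `WithLp 2 (F × E)` to `E × F`. -/
noncomputable def rot (E F : Type*) [NormedAddCommGroup E] [InnerProductSpace ℝ E]
    [NormedAddCommGroup F] [InnerProductSpace ℝ F] :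
    WithLp 2 (F × E) →ₗ[ℝ] E × F :=
  ((LinearMap.snd ℝ F E).prod (-(LinearMap.fst ℝ F E))).comp
    (WithLp.linearEquiv 2 ℝ (F × E)).toLinearMap

@[simp] theorem rot_apply (p : WithLp 2 (F × E)) : rot E F p = (p.snd, -p.fst) := rfl

theorem rot_continuous : Continuous (rot E F) := by
  have h1 : Continuous fun q : F × E => (q.2, -q.1) :=
    continuous_snd.prodMk continuous_fst.neg
  exact h1.comp (WithLp.prodContinuousLinearEquiv 2 ℝ F E).continuous

/-- Duality: the orthogonal complement of the rotated graph of a densely defined `A`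
is the graph of the adjoint. -/
theorem orthogonal_rot_graph (A : E →ₗ.[ℝ] F) (hA : Dense (A.domain : Set E)) :
    (A.graph.comap (rot E F))ᗮ =
      A.adjoint.graph.comap (WithLp.linearEquiv 2 ℝ (F × E)).toLinearMap := by
  ext p
  rw [Submodule.mem_orthogonal, Submodule.mem_comap]
  have hp : (WithLp.linearEquiv 2 ℝ (F × E)).toLinearMap p = (p.fst, p.snd) := rfl
  rw [hp, mem_adjoint_graph_iff A hA]
  constructor
  · intro h x
    have hx : ((WithLp.equiv 2 (F × E)).symm (-(A x), (x : E))) ∈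
        A.graph.comap (rot E F) := by
      rw [Submodule.mem_comap, rot_apply]
      simp only [WithLp.equiv_symm_apply, WithLp.ofLp_toLp, WithLp.toLp_fst, WithLp.toLp_snd, WithLp.ofLp_fst, WithLp.ofLp_snd, neg_neg]
      exact A.mem_graph x
    have := h _ hx
    rw [WithLp.prod_inner_apply] at this
    simp only [WithLp.equiv_symm_apply, WithLp.ofLp_toLp, WithLp.toLp_fst, WithLp.toLp_snd, WithLp.ofLp_fst, WithLp.ofLp_snd, inner_neg_left] at this
    have e1 : ⟪p.snd, (x : E)⟫ = ⟪(x : E), p.snd⟫ := real_inner_comm _ _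
    have e2 : ⟪p.fst, (A x : F)⟫ = ⟪(A x : F), p.fst⟫ := real_inner_comm _ _
    rw [e1, e2]
    linarith [this]
  · intro h q hq
    rw [Submodule.mem_comap, rot_apply, graph_mem_iff] at hq
    obtain ⟨hd, hval⟩ := hq
    rw [WithLp.prod_inner_apply, WithLp.ofLp_fst, WithLp.ofLp_fst, WithLp.ofLp_snd, WithLp.ofLp_snd]
    have h1 : ⟪q.snd, p.snd⟫ = ⟪p.fst, A ⟨q.snd, hd⟩⟫ := by
      rw [real_inner_comm]
      exact h ⟨q.snd, hd⟩
    rw [h1, hval, inner_neg_right, real_inner_comm]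
    ring

/-- If `(u, v)` is orthogonal to the (rotated) graph of the adjoint of a closed densely
defined operator `A`, then `(v, -u)` belongs to the graph of `A` (von Neumann). -/
theorem graph_mem_of_orthogonal (A : E →ₗ.[ℝ] F) (hA : Dense (A.domain : Set E))
    (hAc : A.IsClosed) (u : F) (v : E)
    (h : ∀ y : A.adjoint.domain, ⟪u, (y : F)⟫ + ⟪v, A.adjoint y⟫ = 0) :
    (v, -u) ∈ A.graph := by
  have hNc : IsClosed ((A.graph.comap (rot E F) :
      Submodule ℝ (WithLp 2 (F × E))) : Set (WithLp 2 (F × E))) :=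
    hAc.preimage rot_continuous
  haveI : CompleteSpace (A.graph.comap (rot E F) : Submodule ℝ (WithLp 2 (F × E))) :=
    hNc.completeSpace_coe
  have hNN : (A.graph.comap (rot E F))ᗮᗮ = A.graph.comap (rot E F) :=
    Submodule.orthogonal_orthogonal _
  have key : (WithLp.equiv 2 (F × E)).symm (u, v) ∈ (A.graph.comap (rot E F))ᗮᗮ := by
    rw [orthogonal_rot_graph A hA, Submodule.mem_orthogonal]
    intro q hq
    rw [Submodule.mem_comap] at hq
    have hq' : ((q.fst, q.snd) : F × E) ∈ A.adjoint.graph := hq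
    rw [graph_mem_iff] at hq'
    obtain ⟨hd, hval⟩ := hq'
    rw [WithLp.prod_inner_apply]
    simp only [WithLp.equiv_symm_apply, WithLp.ofLp_toLp, WithLp.toLp_fst, WithLp.toLp_snd, WithLp.ofLp_fst, WithLp.ofLp_snd]
    have hh := h ⟨q.fst, hd⟩
    rw [hval] at hh
    have e1 : ⟪q.fst, u⟫ = ⟪u, q.fst⟫ := real_inner_comm _ _
    have e2 : ⟪q.snd, v⟫ = ⟪v, q.snd⟫ := real_inner_comm _ _
    rw [e1, e2]
    linarith
  rw [hNN, Submodule.mem_comap] at key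
  simpa using key

end AdjRestr


variable {H Y : Type*}
  [NormedAddCommGroup H] [InnerProductSpace ℝ H] [CompleteSpace H]
  [NormedAddCommGroup Y] [InnerProductSpace ℝ Y] [CompleteSpace Y]

/-- The composition `B ∘ C` of a bounded operator `B` with a partially defined operator `C`;
its domain is `D(C)`. -/
noncomputable def clmCompPMap {X : Type*} [NormedAddCommGroup X] [InnerProductSpace ℝ X]
    (B : Y →L[ℝ] X) (C : H →ₗ.[ℝ] Y) : H →ₗ.[ℝ] X :=
  { domain := C.domain
    toFun := (B : Y →ₗ[ℝ] X).comp C.toFun }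

/-- The composition `T ∘ B` of a partially defined operator `T` with a bounded operator `B`;
its domain is `{x | B x ∈ D(T)}`. -/
noncomputable def pMapCompCLM {X : Type*} [NormedAddCommGroup X] [InnerProductSpace ℝ X]
    (T : H →ₗ.[ℝ] Y) (B : X →L[ℝ] H) : X →ₗ.[ℝ] Y :=
  { domain := T.domain.comap (B : X →ₗ[ℝ] H)
    toFun := T.toFun.comp ((B : X →ₗ[ℝ] H).restrict fun _ hx => hx) }

open AdjRestr

set_option maxHeartbeats 1000000 in
theorem step_a (C : H →ₗ.[ℝ] Y) (hC : C.IsClosed)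
    (hCdense : Dense (C.domain : Set H)) (S : Submodule ℝ H) [CompleteSpace S] :
    ((clmCompPMap (ContinuousLinearMap.adjoint S.subtypeL) C.adjoint).graph.comap
        (WithLp.linearEquiv 2 ℝ (Y × S)).toLinearMap)ᗮ =
      (pMapCompCLM C S.subtypeL).graph.comap (rot S Y) := by
  ext p
  rw [Submodule.mem_orthogonal, Submodule.mem_comap, rot_apply, graph_mem_iff]
  constructor
  · intro h
    have key : ((p.snd : H), -p.fst) ∈ C.graph := by
      apply graph_mem_of_orthogonal C hCdense hC
      intro w
      -- use orthogonality against the graph element for w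
      have hw : (w : Y) ∈ (clmCompPMap (ContinuousLinearMap.adjoint S.subtypeL)
          C.adjoint).domain := w.2
      have hmem : ((WithLp.equiv 2 (Y × S)).symm ((w : Y),
          (ContinuousLinearMap.adjoint S.subtypeL) (C.adjoint w))) ∈
          (clmCompPMap (ContinuousLinearMap.adjoint S.subtypeL) C.adjoint).graph.comap
            (WithLp.linearEquiv 2 ℝ (Y × S)).toLinearMap := by
        rw [Submodule.mem_comap]
        exact (clmCompPMap (ContinuousLinearMap.adjoint S.subtypeL) C.adjoint).mem_graph
          ⟨(w : Y), hw⟩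
      have h0 := h _ hmem
      rw [WithLp.prod_inner_apply] at h0
      simp only [WithLp.equiv_symm_apply, WithLp.ofLp_toLp, WithLp.toLp_fst, WithLp.toLp_snd, WithLp.ofLp_fst, WithLp.ofLp_snd] at h0
      have e1 : ⟪((ContinuousLinearMap.adjoint S.subtypeL) (C.adjoint w) : S), p.snd⟫
          = ⟪(C.adjoint w : H), ((p.snd : H))⟫ :=
        ContinuousLinearMap.adjoint_inner_left _ _ _
      rw [e1] at h0
      have e2 : ⟪(w : Y), p.fst⟫ = ⟪p.fst, (w : Y)⟫ := real_inner_comm _ _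
      have e3 : ⟪(C.adjoint w : H), ((p.snd : H))⟫ = ⟪((p.snd : H)), C.adjoint w⟫ :=
        real_inner_comm _ _
      rw [e2, e3] at h0
      exact h0
    rw [graph_mem_iff] at key
    obtain ⟨hd, hval⟩ := key
    exact ⟨hd, hval⟩
  · rintro ⟨hd, hval⟩ q hq
    rw [Submodule.mem_comap] at hq
    have hq' : ((q.fst, q.snd) : Y × S) ∈
        (clmCompPMap (ContinuousLinearMap.adjoint S.subtypeL) C.adjoint).graph := hq
    rw [graph_mem_iff] at hq'
    obtain ⟨hw, hwval⟩ := hq'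
    rw [WithLp.prod_inner_apply, WithLp.ofLp_fst, WithLp.ofLp_fst, WithLp.ofLp_snd, WithLp.ofLp_snd]
    have happ : (clmCompPMap (ContinuousLinearMap.adjoint S.subtypeL) C.adjoint)
        ⟨q.fst, hw⟩ = (ContinuousLinearMap.adjoint S.subtypeL)
          (C.adjoint ⟨q.fst, hw⟩) := rfl
    have e1 : ⟪q.snd, p.snd⟫ = ⟪(C.adjoint ⟨q.fst, hw⟩ : H), ((p.snd : H))⟫ := by
      rw [← hwval, happ]
      exact ContinuousLinearMap.adjoint_inner_left S.subtypeL p.snd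
        (C.adjoint ⟨q.fst, hw⟩)
    have e2 : ⟪(C.adjoint ⟨q.fst, hw⟩ : H), ((p.snd : H))⟫ =
        ⟪q.fst, C ⟨(p.snd : H), hd⟩⟫ :=
      LinearPMap.adjoint_isFormalAdjoint hCdense ⟨q.fst, hw⟩ ⟨(p.snd : H), hd⟩
    have e3 : C ⟨(p.snd : H), hd⟩ = -p.fst := hval
    rw [e1, e2, e3, inner_neg_right, real_inner_comm]
    ring

/-- Let `C : D(C) ⊆ H → Y` be closed and densely defined, `S ⊆ H` a closed subspace with
embedding `ι_S`, and assume the restriction `C ι_S` (with domain `D(C) ∩ S`) is densely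
defined in `S`.  Then `(C ι_S)* = closure (ι_S* C*)`; equivalently, the block operator
`[[0, -C ι_S],[closure(ι_S* C*), 0]]` on `Y ⊕ S` is skew-selfadjoint. -/
theorem adjoint_restriction_eq_closure (C : H →ₗ.[ℝ] Y) (hC : C.IsClosed)
    (hCdense : Dense (C.domain : Set H)) (S : Submodule ℝ H) [CompleteSpace S]
    (hrestr : Dense ((pMapCompCLM C S.subtypeL).domain : Set S)) :
    (pMapCompCLM C S.subtypeL).adjoint =
      (clmCompPMap (ContinuousLinearMap.adjoint S.subtypeL) C.adjoint).closure := by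
  set T := pMapCompCLM C S.subtypeL with hT
  set R := clmCompPMap (ContinuousLinearMap.adjoint S.subtypeL) C.adjoint with hR
  have ha : (R.graph.comap (WithLp.linearEquiv 2 ℝ (Y × S)).toLinearMap)ᗮ =
      T.graph.comap (rot S Y) := step_a C hC hCdense S
  have hb : (T.graph.comap (rot S Y))ᗮ =
      T.adjoint.graph.comap (WithLp.linearEquiv 2 ℝ (Y × S)).toLinearMap :=
    orthogonal_rot_graph T hrestr
  have hclose : (R.graph.comap
        (WithLp.linearEquiv 2 ℝ (Y × S)).toLinearMap).topologicalClosure =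
      T.adjoint.graph.comap (WithLp.linearEquiv 2 ℝ (Y × S)).toLinearMap := by
    rw [← Submodule.orthogonal_orthogonal_eq_closure, ha, hb]
  -- transfer to the plain product
  have hsets : closure (R.graph : Set (Y × S)) = (T.adjoint.graph : Set (Y × S)) := by
    have hcoe : (((R.graph.comap (WithLp.linearEquiv 2 ℝ (Y × S)).toLinearMap).topologicalClosure :
        Submodule ℝ (WithLp 2 (Y × S))) : Set (WithLp 2 (Y × S))) =
        ((T.adjoint.graph.comap (WithLp.linearEquiv 2 ℝ (Y × S)).toLinearMap :
          Submodule ℝ (WithLp 2 (Y × S))) : Set (WithLp 2 (Y × S))) := by rw [hclose]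
    rw [Submodule.topologicalClosure_coe] at hcoe
    have h1 : ((R.graph.comap (WithLp.linearEquiv 2 ℝ (Y × S)).toLinearMap :
        Submodule ℝ (WithLp 2 (Y × S))) : Set (WithLp 2 (Y × S))) =
        ⇑(WithLp.prodContinuousLinearEquiv 2 ℝ Y S).toHomeomorph ⁻¹'
          (R.graph : Set (Y × S)) := rfl
    have h2 : ((T.adjoint.graph.comap (WithLp.linearEquiv 2 ℝ (Y × S)).toLinearMap :
        Submodule ℝ (WithLp 2 (Y × S))) : Set (WithLp 2 (Y × S))) =
        ⇑(WithLp.prodContinuousLinearEquiv 2 ℝ Y S).toHomeomorph ⁻¹'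
          (T.adjoint.graph : Set (Y × S)) := rfl
    rw [h1, h2, ← (WithLp.prodContinuousLinearEquiv 2 ℝ Y S).toHomeomorph.preimage_closure]
      at hcoe
    exact (Set.preimage_eq_preimage
      (WithLp.prodContinuousLinearEquiv 2 ℝ Y S).toHomeomorph.surjective).mp hcoe
  have hgraphs : R.graph.topologicalClosure = T.adjoint.graph :=
    SetLike.coe_injective (by rw [Submodule.topologicalClosure_coe]; exact hsets)
  have hclosable : R.IsClosable := ⟨T.adjoint, hgraphs⟩
  have : R.closure.graph = T.adjoint.graph :=
    hclosable.graph_closure_eq_closure_graph.symm.trans hgraphs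
  exact (LinearPMap.eq_of_eq_graph this).symm
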